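/- arXiv:1806.11449 — 3 statements merged into one kernel-verified Lean document; each statement's English description precedes it below -/
import Mathlib

section
/- At any equilibrium of the interconnected power network with DADOC controllers, the frequency deviation is zero at every bus: ω* = 0, and the power command vector p^{c,*} lies in the span of the all-ones vector (all power commands synchronize). -/
open Finset

lemma const_of_connected' {V : Type*} (Gr : SimpleGraph V) (h : Gr.Connected)
    (f : V → ℝ) (hf : ∀ i j, Gr.Adj i j → f i = f j) (a b : V) : f a = f b := by
  obtain ⟨p⟩ := h.preconnected a b
  induction p with
  | nil => rfl
  | cons h' _ ih => exact (hf _ _ h').trans ih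

/-- At any equilibrium of the interconnected power network with DADOC controllers,
the frequency deviation is zero at every bus, and the power commands synchronize. -/
theorem stmt_1 {G L : Type*} [Fintype G] [Fintype L] [Nonempty G]
    [DecidableEq G]
    (net : SimpleGraph (G ⊕ L)) (hnet : net.Connected)
    (comm : SimpleGraph G) [DecidableRel comm.Adj] (hcomm : comm.Connected)
    (ω : G ⊕ L → ℝ) (pM u pc K kf kc kd : G → ℝ) (α : G → G → ℝ)
    (hα_symm : ∀ i j, α i j = α j i)
    (hα_pos : ∀ i j, comm.Adj i j → 0 < α i j)
    (hkf : ∀ j, 0 < kf j)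
    -- equilibrium equation (13a): ω synchronizes along network edges
    (heq1 : ∀ i j, net.Adj i j → ω i = ω j)
    -- equilibrium equation (13e): pM* = K u*
    (heq5 : ∀ j, pM j = K j * u j)
    -- equilibrium equation (13f): DADOC controller at rest
    (heq6 : ∀ j : G, 0 = pM j - K j * u j - kf j * ω (Sum.inl j) +
      ∑ i ∈ univ.filter (fun i => comm.Adj i j), α i j * (pc i - pc j))
    -- equilibrium equation (13g)
    (heq7 : ∀ j : G, u j = kc j * pc j - kd j * ω (Sum.inl j)) :
    (∀ b : G ⊕ L, ω b = 0) ∧ (∃ c : ℝ, ∀ j : G, pc j = c) := by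
  classical
  obtain ⟨j0⟩ := (inferInstance : Nonempty G)
  -- ω is constant on the network
  have hωconst : ∀ b : G ⊕ L, ω b = ω (Sum.inl j0) :=
    fun b => const_of_connected' net hnet ω heq1 b (Sum.inl j0)
  set w : ℝ := ω (Sum.inl j0) with hw
  -- S j = kf j * w
  set S : G → ℝ := fun j => ∑ i ∈ univ.filter (fun i => comm.Adj i j), α i j * (pc i - pc j)
    with hS
  have hSj : ∀ j : G, S j = kf j * w := by
    intro j
    have h6 := heq6 j
    rw [heq5 j, hωconst (Sum.inl j)] at h6
    simp only [hS] at *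
    linarith
  -- sum of S over all j is zero (antisymmetry)
  have hF : ∀ j : G, S j = ∑ i, (if comm.Adj i j then α i j * (pc i - pc j) else 0) := by
    intro j
    exact Finset.sum_filter (fun i => comm.Adj i j) (fun i => α i j * (pc i - pc j))
  have hsum0 : ∑ j, S j = 0 := by
    have h1 : ∑ j, S j = ∑ j, ∑ i, (if comm.Adj i j then α i j * (pc i - pc j) else 0) := by
      exact Finset.sum_congr rfl fun j _ => hF j
    have h2 : ∑ j, ∑ i, (if comm.Adj i j then α i j * (pc i - pc j) else 0)
        = ∑ j, ∑ i, (if comm.Adj j i then α j i * (pc j - pc i) else 0) :=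
      Finset.sum_comm
    have h3 : ∀ i j : G, (if comm.Adj j i then α j i * (pc j - pc i) else 0)
        = -(if comm.Adj i j then α i j * (pc i - pc j) else 0) := by
      intro i j
      by_cases h : comm.Adj i j
      · rw [if_pos h.symm, if_pos h, hα_symm i j]; ring
      · rw [if_neg (fun h' => h h'.symm), if_neg h, neg_zero]
    have h4 : ∑ j, ∑ i, (if comm.Adj j i then α j i * (pc j - pc i) else 0)
        = -∑ j, ∑ i, (if comm.Adj i j then α i j * (pc i - pc j) else 0) := by
      rw [← Finset.sum_neg_distrib]
      refine Finset.sum_congr rfl fun j _ => ?_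
      rw [← Finset.sum_neg_distrib]
      exact Finset.sum_congr rfl fun i _ => h3 i j
    rw [h1]
    linarith [h2, h4, h1]
  -- hence w = 0
  have hkfsum : 0 < ∑ j : G, kf j :=
    Finset.sum_pos (fun j _ => hkf j) Finset.univ_nonempty
  have hw0 : w = 0 := by
    have : ∑ j, S j = (∑ j : G, kf j) * w := by
      rw [Finset.sum_mul]
      exact Finset.sum_congr rfl fun j _ => hSj j
    rw [hsum0] at this
    rcases mul_eq_zero.mp this.symm with h | h
    · exact absurd h (ne_of_gt hkfsum)
    · exact h
  have hωz : ∀ b : G ⊕ L, ω b = 0 := fun b => (hωconst b).trans hw0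
  refine ⟨hωz, ?_⟩
  -- S j = 0 for all j
  have hSz : ∀ j : G, S j = 0 := fun j => by rw [hSj j, hw0, mul_zero]
  -- maximality argument
  obtain ⟨m, _, hm⟩ := Finset.exists_max_image Finset.univ pc ⟨j0, Finset.mem_univ j0⟩
  set M := pc m with hM
  have hle : ∀ i : G, pc i ≤ M := fun i => hm i (Finset.mem_univ i)
  have step : ∀ j : G, pc j = M → ∀ i : G, comm.Adj i j → pc i = M := by
    intro j hj i hij
    have hnonpos : ∀ i ∈ univ.filter (fun i => comm.Adj i j),
        α i j * (pc i - pc j) ≤ 0 := by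
      intro i hi
      rw [Finset.mem_filter] at hi
      have := hα_pos i j hi.2
      have h2 : pc i - pc j ≤ 0 := by rw [hj]; linarith [hle i]
      exact mul_nonpos_of_nonneg_of_nonpos this.le h2
    have hz := (Finset.sum_eq_zero_iff_of_nonpos hnonpos).mp (hSz j) i
      (Finset.mem_filter.mpr ⟨Finset.mem_univ i, hij⟩)
    have hα := hα_pos i j hij
    have : pc i - pc j = 0 := by
      rcases mul_eq_zero.mp hz with h | h
      · exact absurd h (ne_of_gt hα)
      · exact h
    rw [hj] at this; linarith
  have key2 : ∀ {a b : G}, comm.Walk a b → pc a = M → pc b = M := by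
    intro a b p
    induction p with
    | nil => exact id
    | cons h' _ ih => exact fun ha => ih (step _ ha _ h'.symm)
  have key : ∀ j : G, pc j = M := by
    intro j
    obtain ⟨p⟩ := hcomm.preconnected m j
    exact key2 p rfl
  exact ⟨M, key⟩
end

section
/- Suppose the equilibrium satisfies ω* = 0, all power commands synchronize (p^{c,*}_j = ν for all j ∈ G), p^{M,*}_j = K_j u*_j, u*_j = k_{c,j} p^{c,*}_j, power balance Σ_{j∈G} p^{M,*}_j = Σ_{j∈N} p^L_j holds, and the gains satisfy k_{c,j} = 1/(q_j K_j). Then p^{M,*} is the global minimizer of the optimal generation regulation problem: minimize Σ_{j∈G} (1/2) q_j (p^M_j)² subject to Σ_{j∈G} p^M_j = Σ_{j∈N} p^L_j. -/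
open Finset

/-- With synchronized power commands, `pM* = K u*`, `u* = k_c pc*`, power balance and
the gain choice `k_c = 1/(q K)`, the equilibrium generation is the global minimizer
of the optimal generation regulation problem. -/
theorem stmt_4 {G N : Type*} [Fintype G] [Fintype N]
    (q K kc u pc pM : G → ℝ) (pL : N → ℝ) (ν : ℝ)
    (hq : ∀ j, 0 < q j) (hK : ∀ j, 0 < K j) (hkc : ∀ j, 0 < kc j)
    (hsync : ∀ j, pc j = ν)
    (hpM : ∀ j, pM j = K j * u j)
    (hu : ∀ j, u j = kc j * pc j)
    (hbal : ∑ j : G, pM j = ∑ j : N, pL j)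
    (hgain : ∀ j, kc j = 1 / (q j * K j)) :
    ∀ p : G → ℝ, (∑ j : G, p j = ∑ j : N, pL j) →
      ∑ j : G, (1/2) * q j * (pM j)^2 ≤ ∑ j : G, (1/2) * q j * (p j)^2 := by
  intro p hp
  -- q j * pM j = ν for all j
  have hqpM : ∀ j, q j * pM j = ν := by
    intro j
    have hKj := (hK j).ne'
    have hqj := (hq j).ne'
    rw [hpM j, hu j, hsync j, hgain j]
    field_simp
  have key : ∑ j : G, (1/2 * q j * (p j)^2 - 1/2 * q j * (pM j)^2)
      = ∑ j : G, (1/2 * q j * (p j - pM j)^2 + ν * (p j - pM j)) :=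
    Finset.sum_congr rfl fun j _ => by linear_combination (p j - pM j) * hqpM j
  rw [Finset.sum_sub_distrib] at key
  rw [Finset.sum_add_distrib, ← Finset.mul_sum, Finset.sum_sub_distrib, hp, hbal, sub_self,
    mul_zero, add_zero] at key
  have hnn : 0 ≤ ∑ j : G, 1/2 * q j * (p j - pM j)^2 :=
    Finset.sum_nonneg fun j _ => by nlinarith [hq j, sq_nonneg (p j - pM j)]
  linarith
end

section
/- Let V_F(ω) = (1/2) Σ_{j∈G} M_j (ω_j - ω*_j)² with M_j > 0, where M_j ω̇_j = -p^L_j + p^M_j - Λ_j ω_j - Σ_{k:j→k} p_{jk} + Σ_{i:i→j} p_{ij} for j ∈ G, the load buses satisfy 0 = -p^L_j - Λ_j ω_j - Σ_{k:j→k} p_{jk} + Σ_{i:i→j} p_{ij} for j ∈ L, and the equilibrium equations (the same relations with starred quantities and right-hand sides equal to zero) hold with ω*_i = ω*_j for all (i,j) ∈ E. Then V̇_F = Σ_{j∈G} (ω_j - ω*_j)(p^M_j - p^{M,*}_j) - Σ_{j∈N} Λ_j (ω_j - ω*_j)² + Σ_{(i,j)∈E} (p_{ij} - p*_{ij})(ω_j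 - ω_i). -/
/-!
With `w = ω - ω*` and `q = p - p*`, subtracting the equilibrium equations turns every bus
equation into `M_j ẇ_j = (p^M_j - p^{M,*}_j) - Λ_j w_j + (net inflow of q at j)`, with left side
`0` at load buses; the starred terms cancel exactly because `ω*` is constant along edges, so
`ω_j - ω_i = w_j - w_i`. Then `V̇_F = Σ_{j∈G} w_j M_j ẇ_j`, and the load equations let the sum run
over all buses. Finally `Σ_b w_b (inflow_b - outflow_b) = Σ_{(i,j)∈E} q_{ij} (w_j - w_i)` is
summation by parts on the graph.
-/

open Finset

section NetInflow

variable {V R : Type*} [Fintype V] [DecidableEq V] [CommRing R]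

def netInflow (E : Finset (V × V)) (q : V → V → R) (v : V) : R :=
  (∑ i, if (i, v) ∈ E then q i v else 0) - ∑ k, if (v, k) ∈ E then q v k else 0

theorem netInflow_sub (E : Finset (V × V)) (q q' : V → V → R) (v : V) :
    netInflow E (fun a b => q a b - q' a b) v = netInflow E q v - netInflow E q' v := by
  simp only [netInflow, ← sum_filter, sum_sub_distrib]
  ring

theorem sum_ite_mem_prod (E : Finset (V × V)) (f : V → V → R) :
    ∑ i, ∑ j, (if (i, j) ∈ E then f i j else 0) = ∑ e ∈ E, f e.1 e.2 := by
  rw [← Fintype.sum_ite_mem E, Fintype.sum_prod_type]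

theorem sum_mul_netInflow (E : Finset (V × V)) (q : V → V → R) (w : V → R) :
    ∑ v, w v * netInflow E q v = ∑ e ∈ E, q e.1 e.2 * (w e.2 - w e.1) := by
  have hin : ∑ v, w v * (∑ i, if (i, v) ∈ E then q i v else 0)
      = ∑ e ∈ E, q e.1 e.2 * w e.2 := by
    rw [← sum_ite_mem_prod E fun i j => q i j * w j, sum_comm]
    simp only [mul_sum, mul_ite, mul_zero, mul_comm]
  have hout : ∑ v, w v * (∑ k, if (v, k) ∈ E then q v k else 0)
      = ∑ e ∈ E, q e.1 e.2 * w e.1 := by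
    rw [← sum_ite_mem_prod E fun i j => q i j * w i]
    simp only [mul_sum, mul_ite, mul_zero, mul_comm]
  simp only [netInflow, mul_sub, sum_sub_distrib, hin, hout]

end NetInflow

theorem HasDerivAt.half_sum_mul_sq {ι : Type*} (s : Finset ι) {f : ι → ℝ → ℝ} {f' : ι → ℝ}
    (M c : ι → ℝ) {t : ℝ} (hf : ∀ j ∈ s, HasDerivAt (f j) (f' j) t) :
    HasDerivAt (fun x => (1 / 2) * ∑ j ∈ s, M j * (f j x - c j) ^ 2)
      (∑ j ∈ s, M j * (f j t - c j) * f' j) t := by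
  have h := (HasDerivAt.fun_sum fun j hj =>
    (((hf j hj).sub_const (c j)).pow 2).const_mul (M j)).const_mul (1 / 2 : ℝ)
  refine h.congr_deriv ?_
  rw [mul_sum]
  refine sum_congr rfl fun j _ => ?_
  push_cast
  ring

theorem stmt_7_general {Gt Lt : Type*} [Fintype Gt] [Fintype Lt] [DecidableEq Gt] [DecidableEq Lt]
    (E : Finset ((Gt ⊕ Lt) × (Gt ⊕ Lt)))
    (M : Gt → ℝ) (hM : ∀ j, 0 < M j)
    (Λ : Gt ⊕ Lt → ℝ)
    (pL ωstar : Gt ⊕ Lt → ℝ) (pMstar : Gt → ℝ) (pstar : (Gt ⊕ Lt) → (Gt ⊕ Lt) → ℝ)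
    (ω : Gt ⊕ Lt → ℝ → ℝ) (pM : Gt → ℝ → ℝ) (p : (Gt ⊕ Lt) → (Gt ⊕ Lt) → ℝ → ℝ)
    (t : ℝ)
    -- generator swing dynamics
    (hgen : ∀ j : Gt, HasDerivAt (ω (Sum.inl j))
      ((1 / M j) * (-pL (Sum.inl j) + pM j t - Λ (Sum.inl j) * ω (Sum.inl j) t
        - (∑ k : Gt ⊕ Lt, if (Sum.inl j, k) ∈ E then p (Sum.inl j) k t else 0)
        + (∑ i : Gt ⊕ Lt, if (i, Sum.inl j) ∈ E then p i (Sum.inl j) t else 0))) t)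
    -- load bus power balance
    (hload : ∀ l : Lt, 0 = -pL (Sum.inr l) - Λ (Sum.inr l) * ω (Sum.inr l) t
        - (∑ k : Gt ⊕ Lt, if (Sum.inr l, k) ∈ E then p (Sum.inr l) k t else 0)
        + (∑ i : Gt ⊕ Lt, if (i, Sum.inr l) ∈ E then p i (Sum.inr l) t else 0))
    -- equilibrium equations
    (heqG : ∀ j : Gt, 0 = -pL (Sum.inl j) + pMstar j - Λ (Sum.inl j) * ωstar (Sum.inl j)
        - (∑ k : Gt ⊕ Lt, if (Sum.inl j, k) ∈ E then pstar (Sum.inl j) k else 0)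
        + (∑ i : Gt ⊕ Lt, if (i, Sum.inl j) ∈ E then pstar i (Sum.inl j) else 0))
    (heqL : ∀ l : Lt, 0 = -pL (Sum.inr l) - Λ (Sum.inr l) * ωstar (Sum.inr l)
        - (∑ k : Gt ⊕ Lt, if (Sum.inr l, k) ∈ E then pstar (Sum.inr l) k else 0)
        + (∑ i : Gt ⊕ Lt, if (i, Sum.inr l) ∈ E then pstar i (Sum.inr l) else 0))
    (hωstar : ∀ e ∈ E, ωstar e.1 = ωstar e.2) :
    HasDerivAt
      (fun s => (1/2) * ∑ j : Gt, M j * (ω (Sum.inl j) s - ωstar (Sum.inl j))^2)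
      ((∑ j : Gt, (ω (Sum.inl j) t - ωstar (Sum.inl j)) * (pM j t - pMstar j))
        - (∑ b : Gt ⊕ Lt, Λ b * (ω b t - ωstar b)^2)
        + (∑ e ∈ E, (p e.1 e.2 t - pstar e.1 e.2) * (ω e.2 t - ω e.1 t))) t := by
  set w : Gt ⊕ Lt → ℝ := fun b => ω b t - ωstar b
  set q : Gt ⊕ Lt → Gt ⊕ Lt → ℝ := fun a b => p a b t - pstar a b
  have hflow : ∀ v, netInflow E q v = netInflow E (fun a b => p a b t) v - netInflow E pstar v :=
    netInflow_sub E _ _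
  have hgenDev : ∀ j, w (Sum.inl j) * (-pL (Sum.inl j) + pM j t - Λ (Sum.inl j) * ω (Sum.inl j) t
        - (∑ k : Gt ⊕ Lt, if (Sum.inl j, k) ∈ E then p (Sum.inl j) k t else 0)
        + (∑ i : Gt ⊕ Lt, if (i, Sum.inl j) ∈ E then p i (Sum.inl j) t else 0))
      = w (Sum.inl j) * (pM j t - pMstar j) - Λ (Sum.inl j) * w (Sum.inl j) ^ 2
        + w (Sum.inl j) * netInflow E q (Sum.inl j) := by
    intro j
    rw [hflow]
    simp only [netInflow, w]
    linear_combination -(ω (Sum.inl j) t - ωstar (Sum.inl j)) * heqG j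
  have hloadDev : ∀ l, w (Sum.inr l) * netInflow E q (Sum.inr l)
      = Λ (Sum.inr l) * w (Sum.inr l) ^ 2 := by
    intro l
    rw [hflow]
    simp only [netInflow, w]
    linear_combination (ω (Sum.inr l) t - ωstar (Sum.inr l)) * (heqL l - hload l)
  have hedge : ∀ e ∈ E, (p e.1 e.2 t - pstar e.1 e.2) * (ω e.2 t - ω e.1 t)
      = q e.1 e.2 * (w e.2 - w e.1) := by
    intro e he
    simp only [q, w, hωstar e he]
    ring
  refine (HasDerivAt.half_sum_mul_sq univ M _ fun j _ => hgen j).congr_deriv ?_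
  calc ∑ j, M j * w (Sum.inl j) * ((1 / M j) * _)
      = ∑ j, (w (Sum.inl j) * (pM j t - pMstar j) - Λ (Sum.inl j) * w (Sum.inl j) ^ 2
          + w (Sum.inl j) * netInflow E q (Sum.inl j)) := by
        refine sum_congr rfl fun j _ => ?_
        rw [← hgenDev j]
        field_simp [(hM j).ne']
    _ = _ := by
        rw [sum_congr rfl hedge, ← sum_mul_netInflow,
          Fintype.sum_sum_type (f := fun v => w v * netInflow E q v), Fintype.sum_sum_type]
        simp only [hloadDev, sum_add_distrib, sum_sub_distrib, w]
        ring

/-- Time derivative of the kinetic-energy Lyapunov component `V_F`. -/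
theorem stmt_7 {Gt Lt : Type*} [Fintype Gt] [Fintype Lt] [DecidableEq Gt] [DecidableEq Lt]
    (E : Finset ((Gt ⊕ Lt) × (Gt ⊕ Lt)))
    (M : Gt → ℝ) (hM : ∀ j, 0 < M j)
    (Λ : Gt ⊕ Lt → ℝ) (hΛ : ∀ b, 0 ≤ Λ b)
    (pL ωstar : Gt ⊕ Lt → ℝ) (pMstar : Gt → ℝ) (pstar : (Gt ⊕ Lt) → (Gt ⊕ Lt) → ℝ)
    (ω : Gt ⊕ Lt → ℝ → ℝ) (pM : Gt → ℝ → ℝ) (p : (Gt ⊕ Lt) → (Gt ⊕ Lt) → ℝ → ℝ)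
    (t : ℝ)
    -- generator swing dynamics
    (hgen : ∀ j : Gt, HasDerivAt (ω (Sum.inl j))
      ((1 / M j) * (-pL (Sum.inl j) + pM j t - Λ (Sum.inl j) * ω (Sum.inl j) t
        - (∑ k : Gt ⊕ Lt, if (Sum.inl j, k) ∈ E then p (Sum.inl j) k t else 0)
        + (∑ i : Gt ⊕ Lt, if (i, Sum.inl j) ∈ E then p i (Sum.inl j) t else 0))) t)
    -- load bus power balance
    (hload : ∀ l : Lt, 0 = -pL (Sum.inr l) - Λ (Sum.inr l) * ω (Sum.inr l) t
        - (∑ k : Gt ⊕ Lt, if (Sum.inr l, k) ∈ E then p (Sum.inr l) k t else 0)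
        + (∑ i : Gt ⊕ Lt, if (i, Sum.inr l) ∈ E then p i (Sum.inr l) t else 0))
    -- equilibrium equations
    (heqG : ∀ j : Gt, 0 = -pL (Sum.inl j) + pMstar j - Λ (Sum.inl j) * ωstar (Sum.inl j)
        - (∑ k : Gt ⊕ Lt, if (Sum.inl j, k) ∈ E then pstar (Sum.inl j) k else 0)
        + (∑ i : Gt ⊕ Lt, if (i, Sum.inl j) ∈ E then pstar i (Sum.inl j) else 0))
    (heqL : ∀ l : Lt, 0 = -pL (Sum.inr l) - Λ (Sum.inr l) * ωstar (Sum.inr l)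
        - (∑ k : Gt ⊕ Lt, if (Sum.inr l, k) ∈ E then pstar (Sum.inr l) k else 0)
        + (∑ i : Gt ⊕ Lt, if (i, Sum.inr l) ∈ E then pstar i (Sum.inr l) else 0))
    (hωstar : ∀ e ∈ E, ωstar e.1 = ωstar e.2) :
    HasDerivAt
      (fun s => (1/2) * ∑ j : Gt, M j * (ω (Sum.inl j) s - ωstar (Sum.inl j))^2)
      ((∑ j : Gt, (ω (Sum.inl j) t - ωstar (Sum.inl j)) * (pM j t - pMstar j))
        - (∑ b : Gt ⊕ Lt, Λ b * (ω b t - ωstar b)^2)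
        + (∑ e ∈ E, (p e.1 e.2 t - pstar e.1 e.2) * (ω e.2 t - ω e.1 t))) t :=
  stmt_7_general E M hM Λ pL ωstar pMstar pstar ω pM p t hgen hload heqG heqL hωstar
end
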